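/- arXiv:2203.11634 — 4 statements merged into one kernel-verified Lean document; each statement's English description precedes it below -/
import Mathlib

section
/- Let (F_low, F_up) be a p-box on Ω = {x_1 < ... < x_n} and h : Ω → ℝ any function. Then there exists F in the credal set M(F_low, F_up) minimizing P_F(h) over M(F_low, F_up) such that for every i, F(x_i) ∈ {F_low(x_i), F_up(x_i), F(x_{i−1}), F(x_{i+1})} (with conventions F(x_0) = 0 and omitting F(x_{n+1})). -/
/-- A distribution function on `Ω = {x_1 < ... < x_{n+1}}`, modelled as `Fin (n+1)`. -/
def IsDistFun (n : ℕ) (F : Fin (n + 1) → ℝ) : Prop :=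
  Monotone F ∧ (∀ i, F i ∈ Set.Icc (0 : ℝ) 1) ∧ F (Fin.last n) = 1

/-- The value of `F` at the predecessor, with the convention `F(x_0) = 0`. -/
def prevVal (n : ℕ) (F : Fin (n + 1) → ℝ) (i : Fin (n + 1)) : ℝ :=
  if h : (i : ℕ) = 0 then 0
  else F ⟨(i : ℕ) - 1, Nat.lt_of_le_of_lt (Nat.sub_le _ _) i.isLt⟩

/-- The expectation of `h` with respect to the distribution function `F`:
`P_F(h) = ∑ i, h(x_i) (F(x_i) - F(x_{i-1}))`. -/
def PF (n : ℕ) (F h : Fin (n + 1) → ℝ) : ℝ := ∑ i, h i * (F i - prevVal n F i)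

/-- The credal set of the p-box `(Flow, Fup)`. -/
def credal (n : ℕ) (Flow Fup : Fin (n + 1) → ℝ) : Set (Fin (n + 1) → ℝ) :=
  {F | IsDistFun n F ∧ Flow ≤ F ∧ F ≤ Fup}

/-!
Among the minimizers of `P_F(h)` over the (compact) credal set, take one that also minimizes
`∑ i, F(x_i)`. If at a point `x_i` other than the last the value `F(x_i)` were none of the four
special values, it could be moved in both directions inside the credal set; since `P_F(h)`
depends on it affinely with slope `h(x_i) - h(x_{i+1})`, that slope must vanish, and lowering
`F(x_i)` then keeps `P_F(h)` and decreases the sum. At the last point `F = 1 = F_up`.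
-/

theorem IsCompact.exists_isMinOn_of_tiebreak {X β γ : Type*} [TopologicalSpace X]
    [LinearOrder β] [TopologicalSpace β] [ClosedIicTopology β]
    [LinearOrder γ] [TopologicalSpace γ] [ClosedIicTopology γ]
    {K : Set X} (hK : IsCompact K) (hne : K.Nonempty) {f : X → β} {g : X → γ}
    (hf : Continuous f) (hg : Continuous g) :
    ∃ x ∈ K, IsMinOn f K x ∧ ∀ y ∈ K, f y = f x → g x ≤ g y := by
  obtain ⟨x₀, hx₀K, hx₀⟩ := hK.exists_isMinOn hne hf.continuousOn
  have hS : IsCompact (K ∩ f ⁻¹' Set.Iic (f x₀)) := hK.inter_right (isClosed_Iic.preimage hf)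
  obtain ⟨x, ⟨hxK, hxf⟩, hx⟩ := hS.exists_isMinOn ⟨x₀, hx₀K, le_rfl⟩ hg.continuousOn
  have hfx : f x = f x₀ := le_antisymm hxf (hx₀ hxK)
  exact ⟨x, hxK, fun y hy => hfx ▸ hx₀ hy, fun y hy hyx => hx ⟨hy, (hyx.trans hfx).le⟩⟩

section PBox

variable {n : ℕ}

open Function

@[simp]
lemma prevVal_zero (F : Fin (n + 1) → ℝ) : prevVal n F 0 = 0 := rfl

@[simp]
lemma prevVal_succ (F : Fin (n + 1) → ℝ) (k : Fin n) : prevVal n F k.succ = F k.castSucc := rfl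

lemma prevVal_update_castSucc_of_ne (F : Fin (n + 1) → ℝ) (k : Fin n) (v : ℝ)
    {i : Fin (n + 1)} (hi : i ≠ k.succ) :
    prevVal n (update F k.castSucc v) i = prevVal n F i := by
  cases i using Fin.cases with
  | zero => rfl
  | succ m =>
    rw [prevVal_succ, prevVal_succ, update_of_ne]
    exact fun hmk => hi (by rw [Fin.castSucc_inj.mp hmk])

lemma prevVal_nonneg {F : Fin (n + 1) → ℝ} (hF : 0 ≤ F) (i : Fin (n + 1)) : 0 ≤ prevVal n F i := by
  cases i using Fin.cases with
  | zero => exact le_rfl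
  | succ k => exact hF k.castSucc

lemma prevVal_le_self {F : Fin (n + 1) → ℝ} (hF : Monotone F) (hF₀ : 0 ≤ F 0) (i : Fin (n + 1)) :
    prevVal n F i ≤ F i := by
  cases i using Fin.cases with
  | zero => exact hF₀
  | succ k => exact hF k.castSucc_le_succ

@[fun_prop]
lemma continuous_prevVal (i : Fin (n + 1)) :
    Continuous fun F : Fin (n + 1) → ℝ => prevVal n F i := by
  unfold prevVal
  split_ifs <;> fun_prop

lemma continuous_PF (h : Fin (n + 1) → ℝ) : Continuous fun F => PF n F h := by
  unfold PF
  fun_prop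

lemma PF_update_castSucc (F h : Fin (n + 1) → ℝ) (k : Fin n) (v : ℝ) :
    PF n (update F k.castSucc v) h =
      PF n F h + (v - F k.castSucc) * (h k.castSucc - h k.succ) := by
  have hne : k.castSucc ≠ k.succ := k.castSucc_lt_succ.ne
  rw [← sub_eq_iff_eq_add', PF, PF, ← Finset.sum_sub_distrib,
    Fintype.sum_eq_add k.castSucc k.succ hne]
  · rw [prevVal_update_castSucc_of_ne F k v hne, prevVal_succ, prevVal_succ, update_self,
      update_of_ne hne.symm]
    ring
  · rintro i ⟨hik, hik'⟩
    rw [prevVal_update_castSucc_of_ne F k v hik', update_of_ne hik, sub_self]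

lemma monotone_update_castSucc {F : Fin (n + 1) → ℝ} (hF : Monotone F) {k : Fin n} {v : ℝ}
    (hlo : prevVal n F k.castSucc ≤ v) (hhi : v ≤ F k.succ) :
    Monotone (update F k.castSucc v) := by
  refine Fin.monotone_iff_le_succ.mpr fun m => ?_
  by_cases hmk : m = k
  · subst hmk
    rw [update_self, update_of_ne m.castSucc_lt_succ.ne']
    exact hhi
  rw [update_of_ne (Fin.castSucc_inj.not.mpr hmk)]
  by_cases hm : m.succ = k.castSucc
  · rw [hm, update_self, ← prevVal_succ F m, hm]
    exact hlo
  · rw [update_of_ne hm]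
    exact hF m.castSucc_le_succ

lemma isCompact_credal (Flow Fup : Fin (n + 1) → ℝ) : IsCompact (credal n Flow Fup) := by
  refine isCompact_Icc.of_isClosed_subset ?_ fun F hF => hF.2
  simp only [credal, IsDistFun, Set.ofPred_and, Set.ofPred_forall]
  refine isClosed_monotone.inter ((isClosed_iInter fun i => ?_).inter ?_) |>.inter
    (isClosed_Icc (a := Flow) (b := Fup))
  · exact isClosed_Icc.preimage (continuous_apply i)
  · exact isClosed_eq (continuous_apply _) continuous_const

lemma update_castSucc_mem_credal {Flow Fup F : Fin (n + 1) → ℝ} (hF : F ∈ credal n Flow Fup)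
    {k : Fin n} {v : ℝ} (hlo : max (Flow k.castSucc) (prevVal n F k.castSucc) ≤ v)
    (hhi : v ≤ min (Fup k.castSucc) (F k.succ)) :
    update F k.castSucc v ∈ credal n Flow Fup := by
  obtain ⟨⟨hmono, hIcc, hlast⟩, hFlow, hFup⟩ := hF
  rw [max_le_iff] at hlo
  rw [le_min_iff] at hhi
  refine ⟨⟨monotone_update_castSucc hmono hlo.2 hhi.2, ?_, ?_⟩,
    le_update_iff.mpr ⟨hlo.1, fun j _ => hFlow j⟩, update_le_iff.mpr ⟨hhi.1, fun j _ => hFup j⟩⟩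
  · refine (forall_update_iff F fun _ x => x ∈ Set.Icc (0 : ℝ) 1).mpr ⟨?_, fun j _ => hIcc j⟩
    exact ⟨(prevVal_nonneg (fun j => (hIcc j).1) _).trans hlo.2, hhi.2.trans (hIcc _).2⟩
  · rw [update_of_ne k.castSucc_lt_last.ne']
    exact hlast

lemma exists_mem_credal_PF_lt_or_sum_lt {Flow Fup F : Fin (n + 1) → ℝ}
    (hF : F ∈ credal n Flow Fup) (h : Fin (n + 1) → ℝ) {k : Fin n}
    (hlo : max (Flow k.castSucc) (prevVal n F k.castSucc) < F k.castSucc)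
    (hhi : F k.castSucc < min (Fup k.castSucc) (F k.succ)) :
    ∃ G ∈ credal n Flow Fup, PF n G h < PF n F h ∨ (PF n G h = PF n F h ∧ ∑ j, G j < ∑ j, F j) := by
  have hlower := update_castSucc_mem_credal hF le_rfl (hlo.le.trans hhi.le)
  have hraise := update_castSucc_mem_credal hF (hlo.le.trans hhi.le) le_rfl
  rcases lt_trichotomy (h k.castSucc - h k.succ) 0 with hc | hc | hc
  · refine ⟨_, hraise, Or.inl ?_⟩
    rw [PF_update_castSucc]
    linarith [mul_neg_of_pos_of_neg (sub_pos.mpr hhi) hc]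
  · refine ⟨_, hlower, Or.inr ⟨?_, Fintype.sum_strictMono (update_lt_self_iff.mpr hlo)⟩⟩
    rw [PF_update_castSucc, hc, mul_zero, add_zero]
  · refine ⟨_, hlower, Or.inl ?_⟩
    rw [PF_update_castSucc]
    linarith [mul_neg_of_neg_of_pos (sub_neg.mpr hlo) hc]

lemma special_value_castSucc_of_lexMin {Flow Fup F h : Fin (n + 1) → ℝ}
    (hF : F ∈ credal n Flow Fup) (hmin : IsMinOn (fun G => PF n G h) (credal n Flow Fup) F)
    (htie : ∀ G ∈ credal n Flow Fup, PF n G h = PF n F h → ∑ j, F j ≤ ∑ j, G j) (k : Fin n) :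
    F k.castSucc = Flow k.castSucc ∨ F k.castSucc = Fup k.castSucc ∨
      F k.castSucc = prevVal n F k.castSucc ∨ F k.castSucc = F k.succ := by
  by_contra hne
  push Not at hne
  obtain ⟨hne_low, hne_up, hne_prev, hne_succ⟩ := hne
  have hmono : Monotone F := hF.1.1
  have hlo : max (Flow k.castSucc) (prevVal n F k.castSucc) < F k.castSucc :=
    max_lt ((hF.2.1 _).lt_of_ne' hne_low)
      ((prevVal_le_self hmono (hF.1.2.1 0).1 _).lt_of_ne' hne_prev)
  have hhi : F k.castSucc < min (Fup k.castSucc) (F k.succ) :=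
    lt_min ((hF.2.2 _).lt_of_ne hne_up) ((hmono k.castSucc_le_succ).lt_of_ne hne_succ)
  obtain ⟨G, hG, hlt | ⟨heq, hsum⟩⟩ := exists_mem_credal_PF_lt_or_sum_lt hF h hlo hhi
  · exact (hmin hG).not_gt hlt
  · exact (htie G hG heq).not_gt hsum

end PBox

theorem exists_minimizer_with_special_values_general (n : ℕ) (Flow Fup : Fin (n + 1) → ℝ)
    (hup : IsDistFun n Fup) (hbox : Flow ≤ Fup)
    (h : Fin (n + 1) → ℝ) :
    ∃ F ∈ credal n Flow Fup,
      (∀ G ∈ credal n Flow Fup, PF n F h ≤ PF n G h) ∧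
      ∀ i : Fin (n + 1), F i = Flow i ∨ F i = Fup i ∨ F i = prevVal n F i ∨
        ∃ hi : (i : ℕ) + 1 < n + 1, F i = F ⟨(i : ℕ) + 1, hi⟩ := by
  obtain ⟨F, hF, hmin, htie⟩ := (isCompact_credal Flow Fup).exists_isMinOn_of_tiebreak
    ⟨Fup, hup, hbox, le_rfl⟩ (continuous_PF h) (by fun_prop : Continuous fun F => ∑ i, F i)
  refine ⟨F, hF, fun G hG => hmin hG, fun i => ?_⟩
  cases i using Fin.lastCases with
  | last => exact Or.inr (Or.inl (hF.1.2.2.trans hup.2.2.symm))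
  | cast k =>
    exact (special_value_castSucc_of_lexMin hF hmin htie k).imp_right
      (Or.imp_right (Or.imp_right fun hsucc => ⟨k.succ.isLt, hsucc⟩))

/-- For any `h` there exists a minimizer `F` of `P_F(h)` over the credal set of a
p-box such that at every point, `F(x_i)` is one of `Flow(x_i)`, `Fup(x_i)`,
`F(x_{i-1})` (with `F(x_0) = 0`), or `F(x_{i+1})` (omitted for the last index). -/
theorem exists_minimizer_with_special_values (n : ℕ) (Flow Fup : Fin (n + 1) → ℝ)
    (hlow : IsDistFun n Flow) (hup : IsDistFun n Fup) (hbox : Flow ≤ Fup)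
    (h : Fin (n + 1) → ℝ) :
    ∃ F ∈ credal n Flow Fup,
      (∀ G ∈ credal n Flow Fup, PF n F h ≤ PF n G h) ∧
      ∀ i : Fin (n + 1), F i = Flow i ∨ F i = Fup i ∨ F i = prevVal n F i ∨
        ∃ hi : (i : ℕ) + 1 < n + 1, F i = F ⟨(i : ℕ) + 1, hi⟩ :=
  exists_minimizer_with_special_values_general n Flow Fup hup hbox h
end

section
/- Every extreme point F of the credal set M(F_low, F_up) of a p-box on Ω = {x_1 < ... < x_n} satisfies, for every i, F(x_i) ∈ {F_low(x_j) : j ≥ i} ∪ {F_up(x_k) : k ≤ i}. -/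
open Filter Topology

section ShiftLevelSet

variable {ι : Type*} {F : ι → ℝ} {c δ : ℝ} {j : ι}

noncomputable def shiftLevelSet (F : ι → ℝ) (c δ : ℝ) (j : ι) : ℝ :=
  F j + if F j = c then δ else 0

theorem shiftLevelSet_of_eq (hj : F j = c) : shiftLevelSet F c δ j = c + δ := by
  simp [shiftLevelSet, hj]

theorem shiftLevelSet_of_ne (hj : F j ≠ c) : shiftLevelSet F c δ j = F j := by
  simp [shiftLevelSet, hj]

theorem monotone_shiftLevelSet [Preorder ι] (hF : Monotone F)
    (hgap : ∀ j, F j ≠ c → |δ| ≤ |F j - c|) : Monotone (shiftLevelSet F c δ) := by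
  intro j k hjk
  by_cases hj : F j = c <;> by_cases hk : F k = c
  · rw [shiftLevelSet_of_eq hj, shiftLevelSet_of_eq hk]
  · have hck : c < F k := lt_of_le_of_ne (hj ▸ hF hjk) (Ne.symm hk)
    have hgap_k := hgap k hk
    rw [abs_of_pos (sub_pos.2 hck)] at hgap_k
    rw [shiftLevelSet_of_eq hj, shiftLevelSet_of_ne hk]
    linarith [le_abs_self δ]
  · have hjc : F j < c := lt_of_le_of_ne (hk ▸ hF hjk) hj
    have hgap_j := hgap j hj
    rw [abs_of_neg (sub_neg.2 hjc)] at hgap_j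
    rw [shiftLevelSet_of_ne hj, shiftLevelSet_of_eq hk]
    linarith [neg_abs_le δ]
  · rw [shiftLevelSet_of_ne hj, shiftLevelSet_of_ne hk]
    exact hF hjk

theorem mem_openSegment_shiftLevelSet (F : ι → ℝ) (c δ : ℝ) :
    F ∈ openSegment ℝ (shiftLevelSet F c δ) (shiftLevelSet F c (-δ)) := by
  refine ⟨1 / 2, 1 / 2, by norm_num, by norm_num, by norm_num, ?_⟩
  funext j
  simp only [Pi.add_apply, Pi.smul_apply, smul_eq_mul, shiftLevelSet]
  split_ifs <;> ring

end ShiftLevelSet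

theorem mem_Ioo_of_eq_of_forall_ne {ι : Type*} [LinearOrder ι] {Flow Fup F : ι → ℝ}
    (hlow : Monotone Flow) (hup : Monotone Fup) (hlF : Flow ≤ F) (hFu : F ≤ Fup) {i j : ι}
    (hne_low : ∀ j, i ≤ j → F i ≠ Flow j) (hne_up : ∀ k ≤ i, F i ≠ Fup k) (hj : F j = F i) :
    F i ∈ Set.Ioo (Flow j) (Fup j) := by
  rcases le_total j i with hji | hij
  · exact ⟨(hlow hji).trans_lt ((hlF i).lt_of_ne (hne_low i le_rfl).symm),
      (hj ▸ hFu j).lt_of_ne (hne_up j hji)⟩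
  · exact ⟨(hj ▸ hlF j).lt_of_ne (hne_low j hij).symm,
      ((hFu i).lt_of_ne (hne_up i le_rfl)).trans_le (hup hij)⟩

theorem exists_pos_shift_bound {ι : Type*} [Finite ι] {Flow Fup F : ι → ℝ} {c : ℝ}
    (hlevel : ∀ j, F j = c → c ∈ Set.Ioo (Flow j) (Fup j)) :
    ∃ ε > 0, (∀ j, F j ≠ c → ε ≤ |F j - c|) ∧
      ∀ j, F j = c → Flow j ≤ c - ε ∧ c + ε ≤ Fup j := by
  have hsmall : ∀ j, ∀ᶠ ε in 𝓝[>] (0 : ℝ),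
      (F j ≠ c → ε ≤ |F j - c|) ∧ (F j = c → Flow j ≤ c - ε ∧ c + ε ≤ Fup j) := by
    intro j
    by_cases hj : F j = c
    · obtain ⟨hl, hu⟩ := hlevel j hj
      filter_upwards [nhdsWithin_le_nhds ((eventually_lt_nhds (sub_pos.2 hl)).and
        (eventually_lt_nhds (sub_pos.2 hu)))] with ε hε
      exact ⟨fun h => absurd hj h, fun _ => ⟨by linarith [hε.1], by linarith [hε.2]⟩⟩
    · filter_upwards [nhdsWithin_le_nhds (eventually_lt_nhds (abs_pos.2 (sub_ne_zero.2 hj)))]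
        with ε hε
      exact ⟨fun _ => hε.le, fun h => absurd h hj⟩
  obtain ⟨ε, hε, hpos⟩ := ((eventually_all.2 hsmall).and self_mem_nhdsWithin).exists
  exact ⟨ε, hpos, fun j => (hε j).1, fun j => (hε j).2⟩

theorem shiftLevelSet_mem_credal {n : ℕ} {Flow Fup F : Fin (n + 1) → ℝ} {c δ : ℝ}
    (hF : F ∈ credal n Flow Fup) (hlow : IsDistFun n Flow) (hup : IsDistFun n Fup)
    (hlast : F (Fin.last n) ≠ c) (hgap : ∀ j, F j ≠ c → |δ| ≤ |F j - c|)
    (hbox : ∀ j, F j = c → Flow j ≤ c - |δ| ∧ c + |δ| ≤ Fup j) :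
    shiftLevelSet F c δ ∈ credal n Flow Fup := by
  obtain ⟨⟨hFmono, -, hFlast⟩, hlF, hFu⟩ := hF
  have hlower : Flow ≤ shiftLevelSet F c δ := by
    intro j
    by_cases hj : F j = c
    · rw [shiftLevelSet_of_eq hj]
      linarith [(hbox j hj).1, neg_abs_le δ]
    · rw [shiftLevelSet_of_ne hj]
      exact hlF j
  have hupper : shiftLevelSet F c δ ≤ Fup := by
    intro j
    by_cases hj : F j = c
    · rw [shiftLevelSet_of_eq hj]
      linarith [(hbox j hj).2, le_abs_self δ]
    · rw [shiftLevelSet_of_ne hj]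
      exact hFu j
  refine ⟨⟨monotone_shiftLevelSet hFmono hgap, fun j => ?_, ?_⟩, hlower, hupper⟩
  · exact ⟨(hlow.2.1 j).1.trans (hlower j), (hupper j).trans (hup.2.1 j).2⟩
  · rw [shiftLevelSet_of_ne hlast, hFlast]

theorem extreme_point_values_general (n : ℕ) (Flow Fup : Fin (n + 1) → ℝ)
    (hlow : IsDistFun n Flow) (hup : IsDistFun n Fup)
    (F : Fin (n + 1) → ℝ)
    (hF : F ∈ Set.extremePoints ℝ (credal n Flow Fup)) :
    ∀ i : Fin (n + 1),
      (∃ j : Fin (n + 1), i ≤ j ∧ F i = Flow j) ∨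
      (∃ k : Fin (n + 1), k ≤ i ∧ F i = Fup k) := by
  intro i
  by_contra! ⟨hne_low, hne_up⟩
  obtain ⟨hFmem, hFext⟩ := hF
  have hlevel : ∀ j, F j = F i → F i ∈ Set.Ioo (Flow j) (Fup j) := fun j =>
    mem_Ioo_of_eq_of_forall_ne hlow.1 hup.1 hFmem.2.1 hFmem.2.2 hne_low hne_up
  obtain ⟨ε, hε, hgap, hbox⟩ := exists_pos_shift_bound hlevel
  have hlast : F (Fin.last n) ≠ F i := by
    rw [hFmem.1.2.2]
    exact ((hlevel i rfl).2.trans_le (hup.2.1 i).2).ne'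
  have hshift : ∀ δ, |δ| = ε → shiftLevelSet F (F i) δ ∈ credal n Flow Fup := fun δ hδ =>
    shiftLevelSet_mem_credal hFmem hlow hup hlast (hδ ▸ hgap) (hδ ▸ hbox)
  have hup_eq : shiftLevelSet F (F i) ε = F :=
    hFext (hshift ε (abs_of_pos hε)) (hshift (-ε) (by rw [abs_neg, abs_of_pos hε]))
      (mem_openSegment_shiftLevelSet F (F i) ε)
  have hi := congrFun hup_eq i
  rw [shiftLevelSet_of_eq rfl] at hi
  linarith

/-- Every extreme point `F` of the credal set of a p-box satisfies, for every `i`,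
`F(x_i) ∈ {Flow(x_j) : j ≥ i} ∪ {Fup(x_k) : k ≤ i}`. -/
theorem extreme_point_values (n : ℕ) (Flow Fup : Fin (n + 1) → ℝ)
    (hlow : IsDistFun n Flow) (hup : IsDistFun n Fup) (hbox : Flow ≤ Fup)
    (F : Fin (n + 1) → ℝ)
    (hF : F ∈ Set.extremePoints ℝ (credal n Flow Fup)) :
    ∀ i : Fin (n + 1),
      (∃ j : Fin (n + 1), i ≤ j ∧ F i = Flow j) ∨
      (∃ k : Fin (n + 1), k ≤ i ∧ F i = Fup k) :=
  extreme_point_values_general n Flow Fup hlow hup F hF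
end

section
/- Let Ω = {x_1 < ... < x_n} with n ≥ 2, A_i = {x_1,...,x_i}, and suppose a collection B of subsets of Ω contains A_i, A_j^c and A_k with i < j < k and j > i + 1 (so |A_j ∖ A_i| ≥ 2), together with only singletons and possibly Ω. If B additionally satisfies that A_i ∈ B implies {x_{i+1}} ∉ B and A_j^c ∈ B implies {x_j} ∉ B, then the indicator vectors {1_B : B ∈ B} cannot be completed to n linearly independent vectors using only singletons from A_j ∖ A_i; i.e., B cannot generate a maximal elementary simplicial cone. -/
/-- The indicator vector of a subset of `Fin n`. -/
noncomputable def ind {n : ℕ} (s : Set (Fin n)) : Fin n → ℝ := Set.indicator s 1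

/-- The lower set `A_i = {x_1, ..., x_i}` (here `{x | x ≤ i}` in `Fin n`). -/
def lowSet {n : ℕ} (i : Fin n) : Set (Fin n) := {x | x ≤ i}

/-!
Every admissible generator takes the same value at the two points `x_{i+1}` and `x_j` of
`A_j ∖ A_i`: neither lies in `A_i` or in `A_jᶜ`, both lie in `A_k` and `Ω`, and the excluded
singletons `{x_{i+1}}`, `{x_j}` are exactly the ones that could separate them. Hence all indicator
vectors lie in the hyperplane `v (x_{i+1}) = v x_j`, which cannot hold `n` independent vectors.
-/

open Module Submodule

theorem LinearIndependent.card_lt_of_forall_apply_eq {K ι κ : Type*} [Field K] [Fintype ι]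
    [Fintype κ] {v : κ → ι → K} (hv : LinearIndependent K v) {a b : ι} (hab : a ≠ b)
    (h : ∀ t, v t a = v t b) : Fintype.card κ < Fintype.card ι := by
  classical
  let f : (ι → K) →ₗ[K] K := LinearMap.proj (R := K) (φ := fun _ => K) a - LinearMap.proj b
  have hspan : span K (Set.range v) ≤ LinearMap.ker f :=
    span_le.2 <| Set.range_subset_iff.2 fun t => by simp [f, h t]
  have hker : LinearMap.ker f ≠ ⊤ := fun htop => (one_ne_zero : (1 : K) ≠ 0) <| by
    simpa [f, hab] using LinearMap.congr_fun (LinearMap.ker_eq_top.1 htop) (Pi.single a (1 : K))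
  calc Fintype.card κ = finrank K (span K (Set.range v)) := (finrank_span_eq_card hv).symm
    _ ≤ finrank K (LinearMap.ker f) := finrank_mono hspan
    _ < finrank K (ι → K) := finrank_lt hker
    _ = Fintype.card ι := finrank_fintype_fun_eq_card K

theorem ind_apply_eq_of_mem_iff {n : ℕ} {s : Set (Fin n)} {x y : Fin n} (h : x ∈ s ↔ y ∈ s) :
    ind s x = ind s y := by
  classical
  simp only [ind, Set.indicator_apply, Pi.one_apply, h]

theorem mem_iff_mem_of_lowSet_or_singleton {n : ℕ} {i j k a : Fin n} {s : Set (Fin n)}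
    (hia : i < a) (haj : a ≤ j) (hjk : j ≤ k)
    (hs : s = lowSet i ∨ s = (lowSet j)ᶜ ∨ s = lowSet k ∨ s = Set.univ ∨ ∃ x : Fin n, s = {x})
    (hsa : s ≠ {a}) (hsj : s ≠ {j}) : a ∈ s ↔ j ∈ s := by
  rcases hs with rfl | rfl | rfl | rfl | ⟨x, rfl⟩
  · exact iff_of_false (not_le.2 hia) (not_le.2 (hia.trans_le haj))
  · exact iff_of_false (not_not.2 haj) (not_not.2 (le_refl j))
  · exact iff_of_true (haj.trans hjk) hjk
  · exact iff_of_true trivial trivial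
  · exact iff_of_false (fun hax => hsa (hax ▸ rfl)) (fun hjx => hsj (hjx ▸ rfl))

theorem case_two_not_mesc_general (n : ℕ) (i j k : Fin n)
    (hij : (i : ℕ) + 1 < (j : ℕ)) (hjk : j < k)
    (𝓑 : Finset (Set (Fin n)))
    (hform : ∀ s ∈ 𝓑, s = lowSet i ∨ s = (lowSet j)ᶜ ∨ s = lowSet k ∨
      s = Set.univ ∨ ∃ x : Fin n, s = {x})
    (hs1 : ({(⟨(i : ℕ) + 1, lt_trans hij j.isLt⟩ : Fin n)} : Set (Fin n)) ∉ 𝓑)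
    (hs2 : ({j} : Set (Fin n)) ∉ 𝓑) :
    ¬ (𝓑.card = n ∧ LinearIndependent ℝ (fun s : {s // s ∈ 𝓑} => ind s.val)) := by
  rintro ⟨hcard, hli⟩
  set a : Fin n := ⟨(i : ℕ) + 1, lt_trans hij j.isLt⟩
  have hia : i < a := Fin.lt_def.2 (Nat.lt_succ_self _)
  have haj : a < j := Fin.lt_def.2 hij
  have hlt := hli.card_lt_of_forall_apply_eq haj.ne fun s =>
    ind_apply_eq_of_mem_iff <| mem_iff_mem_of_lowSet_or_singleton hia haj.le hjk.le
      (hform s s.2) (ne_of_mem_of_not_mem s.2 hs1) (ne_of_mem_of_not_mem s.2 hs2)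
  simp [hcard] at hlt

/-- Case 2 impossibility: if a collection `𝓑` contains `A_i`, `A_jᶜ` and `A_k` with
`i < j < k` and `|A_j ∖ A_i| ≥ 2`, and otherwise consists only of singletons and
possibly `Ω`, with `{x_{i+1}} ∉ 𝓑` and `{x_j} ∉ 𝓑`, then `𝓑` cannot consist of `n`
linearly independent indicator vectors, i.e. it cannot generate a maximal elementary
simplicial cone. -/
theorem case_two_not_mesc (n : ℕ) (hn : 2 ≤ n) (i j k : Fin n)
    (hij : (i : ℕ) + 1 < (j : ℕ)) (hjk : j < k)
    (𝓑 : Finset (Set (Fin n)))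
    (hAi : lowSet i ∈ 𝓑) (hAj : (lowSet j)ᶜ ∈ 𝓑) (hAk : lowSet k ∈ 𝓑)
    (hform : ∀ s ∈ 𝓑, s = lowSet i ∨ s = (lowSet j)ᶜ ∨ s = lowSet k ∨
      s = Set.univ ∨ ∃ x : Fin n, s = {x})
    (hs1 : ({(⟨(i : ℕ) + 1, lt_trans hij j.isLt⟩ : Fin n)} : Set (Fin n)) ∉ 𝓑)
    (hs2 : ({j} : Set (Fin n)) ∉ 𝓑) :
    ¬ (𝓑.card = n ∧ LinearIndependent ℝ (fun s : {s // s ∈ 𝓑} => ind s.val)) :=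
  case_two_not_mesc_general n i j k hij hjk 𝓑 hform hs1 hs2
end

section
/- Let Ω = {1,...,5} and let the p-box bounds be F_low(i) = i/5 and F_up(i) = 1 for i ∈ Ω. Then the distribution function F given by F = (1/5, 3/5, 3/5, 4/5, 1) is an extreme point of the credal set M(F_low, F_up). -/
private lemma avg_ge (a b u v c : ℝ) (ha : 0 < a) (hb : 0 < b) (hab : a + b = 1)
    (hu : c ≤ u) (hv : c ≤ v) (h : a * u + b * v = c) : u = c ∧ v = c := by
  have key : a * (u - c) + b * (v - c) = 0 := by linear_combination h - c * hab
  have h1 : 0 ≤ a * (u - c) := mul_nonneg ha.le (by linarith)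
  have h2 : 0 ≤ b * (v - c) := mul_nonneg hb.le (by linarith)
  have e1 : a * (u - c) = 0 := by linarith
  have e2 : b * (v - c) = 0 := by linarith
  constructor
  · rcases mul_eq_zero.1 e1 with h' | h'
    · exact absurd h' ha.ne'
    · linarith
  · rcases mul_eq_zero.1 e2 with h' | h'
    · exact absurd h' hb.ne'
    · linarith

private lemma avg_le (a b u v c : ℝ) (ha : 0 < a) (hb : 0 < b) (hab : a + b = 1)
    (hu : u ≤ c) (hv : v ≤ c) (h : a * u + b * v = c) : u = c ∧ v = c := by
  have key : a * (c - u) + b * (c - v) = 0 := by linear_combination c * hab - h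
  have h1 : 0 ≤ a * (c - u) := mul_nonneg ha.le (by linarith)
  have h2 : 0 ≤ b * (c - v) := mul_nonneg hb.le (by linarith)
  have e1 : a * (c - u) = 0 := by linarith
  have e2 : b * (c - v) = 0 := by linarith
  constructor
  · rcases mul_eq_zero.1 e1 with h' | h'
    · exact absurd h' ha.ne'
    · linarith
  · rcases mul_eq_zero.1 e2 with h' | h'
    · exact absurd h' hb.ne'
    · linarith

/-- With `Ω = {1,...,5}` (modelled as `Fin 5`), p-box bounds `Flow(i) = i/5` and
`Fup(i) = 1`, the distribution function `F = (1/5, 3/5, 3/5, 4/5, 1)` is an extreme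
point of the credal set of the p-box. -/
theorem concrete_extreme_point :
    (![1/5, 3/5, 3/5, 4/5, 1] : Fin 5 → ℝ) ∈
      Set.extremePoints ℝ
        {G : Fin 5 → ℝ | Monotone G ∧ (∀ i, G i ∈ Set.Icc (0 : ℝ) 1) ∧ G 4 = 1 ∧
          ∀ i : Fin 5, ((i : ℕ) + 1 : ℝ) / 5 ≤ G i ∧ G i ≤ 1} := by
  constructor
  · refine ⟨?_, ?_, ?_, ?_⟩
    · intro i j hij
      fin_cases i <;> fin_cases j <;> simp_all <;> norm_num
    · intro i; fin_cases i <;> norm_num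
    · rfl
    · intro i; fin_cases i <;> norm_num
  · rintro x ⟨hxm, hx01, hx4, hxb⟩ y ⟨hym, hy01, hy4, hyb⟩ ⟨a, b, ha, hb, hab, habs⟩
    have hc : ∀ i : Fin 5, a * x i + b * y i = ![(1:ℝ)/5, 3/5, 3/5, 4/5, 1] i := by
      intro i
      have := congrFun habs i
      simpa using this
    have h0 := hc 0
    have h1 := hc 1
    have h2 := hc 2
    have h3 := hc 3
    have hx0 := (hxb 0).1
    have hy0 := (hyb 0).1
    have hx2 := (hxb 2).1
    have hy2 := (hyb 2).1
    have hx3 : (4:ℝ)/5 ≤ x 3 := by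
      have := (hxb 3).1
      norm_num [show ((3:Fin 5):ℕ) = 3 from rfl] at this
      linarith
    have hy3 : (4:ℝ)/5 ≤ y 3 := by
      have := (hyb 3).1
      norm_num [show ((3:Fin 5):ℕ) = 3 from rfl] at this
      linarith
    norm_num at hx0 hy0 hx2 hy2 hx3 hy3 h0 h1 h2 h3
    obtain ⟨ex0, ey0⟩ := avg_ge a b _ _ _ ha hb hab hx0 hy0 h0
    obtain ⟨ex2, ey2⟩ := avg_ge a b _ _ _ ha hb hab hx2 hy2 h2
    obtain ⟨ex3, ey3⟩ := avg_ge a b _ _ _ ha hb hab hx3 hy3 h3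
    have hx12 : x 1 ≤ (3:ℝ)/5 := ex2 ▸ hxm (by decide : (1:Fin 5) ≤ 2)
    have hy12 : y 1 ≤ (3:ℝ)/5 := ey2 ▸ hym (by decide : (1:Fin 5) ≤ 2)
    obtain ⟨ex1, ey1⟩ := avg_le a b _ _ _ ha hb hab hx12 hy12 h1
    funext i <;> fin_cases i <;>
      simp_all
end
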